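/- For $1<p<2$ there exists a constant $c(p)>0$ such that for all $x,y\in\mathbb{R}^N$ with $x\ne 0$: $p|x|^{p-2}|y|^2+p(p-2)|\tilde\omega(x,x+y)|^{p-2}(|x|-|x+y|)^2\ge c(p)\frac{|x|}{|x|+|y|}|x|^{p-2}|y|^2$, where $\tilde\omega(x,x+y)=\big(\frac{|x+y|}{(2-p)|x+y|+(p-1)|x|}\big)^{1/(p-2)}x$ if $|x|<|x+y|$ and $\tilde\omega(x,x+y)=x$ otherwise. -/

import Mathlib

open Real

/-!
Write `a = ‖x‖`, `b = ‖x + y‖`, `t = ‖y‖`, so that `|a - b| ≤ t`. Since `ω̃(x, x + y)` is a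
nonnegative multiple of `x`, `‖ω̃‖ ^ (p - 2) = ρ · a ^ (p - 2)` with `ρ = 1` if `b ≤ a` and
`ρ = b / ((2 - p) b + (p - 1) a)` if `a < b`. The left-hand side is then
`p a ^ (p - 2) (t² - (2 - p) ρ (a - b)²)`, and the theorem holds with `c = p (p - 1)` once
`t² - (2 - p) ρ (a - b)² ≥ (p - 1) a t² / (a + t)`, an inequality between real numbers.
-/

noncomputable def tildeOmega {E : Type*} [NormedAddCommGroup E] [NormedSpace ℝ E]
    (p : ℝ) (x z : E) : E :=
  if ‖x‖ < ‖z‖ then ((‖z‖ / ((2 - p) * ‖z‖ + (p - 1) * ‖x‖)) ^ ((1 : ℝ) / (p - 2))) • x else x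

/-- `ρ` in the notation of the header, with `a = ‖x‖` and `b = ‖z‖`. -/
noncomputable def tildeOmegaWeight (p a b : ℝ) : ℝ :=
  if a < b then b / ((2 - p) * b + (p - 1) * a) else 1

lemma norm_rpow_one_div_smul_rpow {E : Type*} [NormedAddCommGroup E] [NormedSpace ℝ E]
    {r q : ℝ} (hr : 0 ≤ r) (hq : q ≠ 0) (x : E) :
    ‖(r ^ (1 / q)) • x‖ ^ q = r * ‖x‖ ^ q := by
  rw [norm_smul, norm_eq_abs, abs_of_nonneg (rpow_nonneg hr _),
    mul_rpow (rpow_nonneg hr _) (norm_nonneg x), ← rpow_mul hr, one_div_mul_cancel hq, rpow_one]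

lemma norm_tildeOmega_rpow {E : Type*} [NormedAddCommGroup E] [NormedSpace ℝ E]
    {p : ℝ} (hp2 : p < 2) (x z : E) :
    ‖tildeOmega p x z‖ ^ (p - 2) = tildeOmegaWeight p ‖x‖ ‖z‖ * ‖x‖ ^ (p - 2) := by
  unfold tildeOmega tildeOmegaWeight
  split_ifs with h
  · have hD : 0 < (2 - p) * ‖z‖ + (p - 1) * ‖x‖ := by nlinarith [norm_nonneg x]
    exact norm_rpow_one_div_smul_rpow (by positivity) (by linarith) x
  · rw [one_mul]

lemma sub_one_mul_div_mul_sq_le_of_abs_sub_le {p a b t : ℝ} (hp1 : 1 ≤ p) (hp2 : p ≤ 2)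
    (ha : 0 < a) (ht : 0 ≤ t) (hab : |a - b| ≤ t) :
    (p - 1) * (a / (a + t)) * t ^ 2 ≤ t ^ 2 + (p - 2) * (a - b) ^ 2 := by
  have hsq : (a - b) ^ 2 ≤ t ^ 2 := sq_le_sq' (abs_le.1 hab).1 (abs_le.1 hab).2
  have hfrac : a / (a + t) ≤ 1 := (div_le_one (by linarith)).2 (by linarith)
  calc (p - 1) * (a / (a + t)) * t ^ 2 ≤ (p - 1) * 1 * t ^ 2 := by gcongr
    _ ≤ t ^ 2 + (p - 2) * (a - b) ^ 2 := by nlinarith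

lemma sub_one_mul_div_mul_sq_le_of_lt {p a b t : ℝ} (hp1 : 1 ≤ p) (hp2 : p ≤ 2)
    (ha : 0 < a) (hab : a < b) (hbt : b - a ≤ t) :
    (p - 1) * (a / (a + t)) * t ^ 2 ≤
      t ^ 2 + (p - 2) * (b / ((2 - p) * b + (p - 1) * a)) * (a - b) ^ 2 := by
  set D := (2 - p) * b + (p - 1) * a with hD_def
  have hD : 0 < D := by nlinarith
  have hat : 0 < a + t := by linarith
  have hsq : (a - b) ^ 2 ≤ t ^ 2 := by nlinarith
  -- `D = b - (p - 1)(b - a) ≤ a + t`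
  have hDat : D ≤ a + t := by nlinarith
  -- the difference of the two sides is `(2 - p) b (t² - (a - b)²)`
  have hnum : (p - 1) * a * t ^ 2 ≤ t ^ 2 * D + (p - 2) * b * (a - b) ^ 2 := by
    nlinarith [mul_le_mul_of_nonneg_left hsq (by nlinarith : 0 ≤ (2 - p) * b)]
  have hexpand : t ^ 2 + (p - 2) * (b / D) * (a - b) ^ 2 - (p - 1) * (a / (a + t)) * t ^ 2 =
      ((t ^ 2 * D + (p - 2) * b * (a - b) ^ 2) * (a + t) - (p - 1) * a * t ^ 2 * D)
        / (D * (a + t)) := by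
    field_simp
  rw [← sub_nonneg, hexpand]
  apply div_nonneg _ (by positivity)
  nlinarith [mul_le_mul_of_nonneg_right hnum hat.le,
    mul_le_mul_of_nonneg_left hDat (by positivity : 0 ≤ (p - 1) * a * t ^ 2)]

lemma sub_one_mul_div_mul_sq_le_tildeOmegaWeight {p a b t : ℝ} (hp1 : 1 ≤ p) (hp2 : p ≤ 2)
    (ha : 0 < a) (ht : 0 ≤ t) (hab : |a - b| ≤ t) :
    (p - 1) * (a / (a + t)) * t ^ 2 ≤ t ^ 2 + (p - 2) * tildeOmegaWeight p a b * (a - b) ^ 2 := by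
  unfold tildeOmegaWeight
  split_ifs with h
  · exact sub_one_mul_div_mul_sq_le_of_lt hp1 hp2 ha h (by linarith [(abs_le.1 hab).1])
  · rw [mul_one]
    exact sub_one_mul_div_mul_sq_le_of_abs_sub_le hp1 hp2 ha ht hab

theorem tilde_omega_lower_bound_general (N : ℕ) (p : ℝ) (hp1 : 1 < p) (hp2 : p < 2) :
    ∃ c : ℝ, 0 < c ∧ ∀ x y : EuclideanSpace ℝ (Fin N), x ≠ 0 →
      let w : EuclideanSpace ℝ (Fin N) :=
        if ‖x‖ < ‖x + y‖ then
          ((‖x + y‖ / ((2 - p) * ‖x + y‖ + (p - 1) * ‖x‖)) ^ ((1 : ℝ) / (p - 2))) • x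
        else x
      p * ‖x‖ ^ (p - 2) * ‖y‖ ^ 2 + p * (p - 2) * ‖w‖ ^ (p - 2) * (‖x‖ - ‖x + y‖) ^ 2
        ≥ c * (‖x‖ / (‖x‖ + ‖y‖)) * ‖x‖ ^ (p - 2) * ‖y‖ ^ 2 := by
  refine ⟨p * (p - 1), by nlinarith, fun x y hx => ?_⟩
  change _ + p * (p - 2) * ‖tildeOmega p x (x + y)‖ ^ (p - 2) * _ ≥ _
  have hab : |‖x‖ - ‖x + y‖| ≤ ‖y‖ := by simpa using abs_norm_sub_norm_le x (x + y)
  have key := sub_one_mul_div_mul_sq_le_tildeOmegaWeight hp1.le hp2.le (norm_pos_iff.2 hx)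
    (norm_nonneg y) hab
  have hA : 0 ≤ p * ‖x‖ ^ (p - 2) := by positivity
  rw [norm_tildeOmega_rpow hp2]
  nlinarith [mul_le_mul_of_nonneg_left key hA]

theorem tilde_omega_lower_bound (N : ℕ) (hN : 1 ≤ N) (p : ℝ) (hp1 : 1 < p) (hp2 : p < 2) :
    ∃ c : ℝ, 0 < c ∧ ∀ x y : EuclideanSpace ℝ (Fin N), x ≠ 0 →
      let w : EuclideanSpace ℝ (Fin N) :=
        if ‖x‖ < ‖x + y‖ then
          ((‖x + y‖ / ((2 - p) * ‖x + y‖ + (p - 1) * ‖x‖)) ^ ((1 : ℝ) / (p - 2))) • x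
        else x
      p * ‖x‖ ^ (p - 2) * ‖y‖ ^ 2 + p * (p - 2) * ‖w‖ ^ (p - 2) * (‖x‖ - ‖x + y‖) ^ 2
        ≥ c * (‖x‖ / (‖x‖ + ‖y‖)) * ‖x‖ ^ (p - 2) * ‖y‖ ^ 2 :=
  tilde_omega_lower_bound_general N p hp1 hp2
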